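/- arXiv:1011.4749 — 3 statements merged into one kernel-verified Lean document; each statement's English description precedes it below -/
import Mathlib

section
/- Let G be a connected graph and B a set of edges that meets the edge set of every spanning tree of G and is minimal with this property. Then B contains a bond of G. -/
/-!
Deleting `B` must disconnect `G`: otherwise a spanning tree of `G - B` would be a spanning tree
of `G` avoiding `B`. The edges of `G` leaving the component of `G - B` containing a vertex `u` then
form a cut inside `B`. Every nonempty cut meets every spanning tree, so minimality of `B` forces
`B` to equal this cut, and likewise forbids any smaller nonempty cut inside `B`.
-/

variable {V : Type*}

/-- The cut of a graph `G` determined by a vertex set `A`: all edges of `G` with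
one endvertex in `A` and the other outside `A`. -/
def cutEdges (G : SimpleGraph V) (A : Set V) : Set (Sym2 V) :=
  {e | e ∈ G.edgeSet ∧ ∃ u v : V, e = s(u, v) ∧ u ∈ A ∧ v ∉ A}

/-- A bond of `G`: a minimal non-empty cut. -/
def IsBond (G : SimpleGraph V) (B : Set (Sym2 V)) : Prop :=
  Minimal (fun D => D.Nonempty ∧ ∃ A : Set V, D = cutEdges G A) B

/-- A spanning tree of `G`: a spanning subgraph that is connected and acyclic. -/
def IsSpanningTree (G : SimpleGraph V) (T : G.Subgraph) : Prop :=
  T.IsSpanning ∧ T.Connected ∧ T.coe.IsAcyclic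

open SimpleGraph

variable {G : SimpleGraph V}

lemma isSpanningTree_toSubgraph {H : SimpleGraph V} (hHG : H ≤ G) (hH : H.IsTree) :
    IsSpanningTree G (G.toSubgraph H hHG) := by
  have hsp : (G.toSubgraph H hHG).IsSpanning := toSubgraph.isSpanning H hHG
  have hT : (G.toSubgraph H hHG).coe.IsTree :=
    ((G.toSubgraph H hHG).spanningCoeEquivCoeOfSpanning hsp).isTree_iff.mp hH
  exact ⟨hsp, ⟨hT.connected⟩, hT.isAcyclic⟩

lemma SimpleGraph.Connected.exists_isSpanningTree_edgeSet_subset {H : SimpleGraph V} (hHG : H ≤ G)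
    (hH : H.Connected) : ∃ T : G.Subgraph, IsSpanningTree G T ∧ T.edgeSet ⊆ H.edgeSet := by
  obtain ⟨F, hFH, hF⟩ := hH.exists_isTree_le
  exact ⟨G.toSubgraph F (hFH.trans hHG), isSpanningTree_toSubgraph _ hF,
    edgeSet_mono hFH⟩

lemma IsSpanningTree.cutEdges_inter_nonempty {T : G.Subgraph} (hT : IsSpanningTree G T)
    {A : Set V} {u v : V} (hu : u ∈ A) (hv : v ∉ A) : (cutEdges G A ∩ T.edgeSet).Nonempty := by
  obtain ⟨hsp, hconn, -⟩ := hT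
  obtain ⟨p⟩ := hconn.coe ⟨u, hsp u⟩ ⟨v, hsp v⟩
  obtain ⟨⟨⟨x, y⟩, hxy⟩, -, hx, hy⟩ := p.exists_boundary_dart {z | (z : V) ∈ A} hu hv
  exact ⟨s(x, y), ⟨hxy.adj_sub, x, y, rfl, hx, hy⟩, hxy⟩

lemma exists_not_reachable_deleteEdges [Nonempty V] {B : Set (Sym2 V)}
    (hB : ∀ T : G.Subgraph, IsSpanningTree G T → (B ∩ T.edgeSet).Nonempty) :
    ∃ u v, ¬ (G.deleteEdges B).Reachable u v := by
  by_contra! hconn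
  obtain ⟨T, hT, hTB⟩ := SimpleGraph.Connected.exists_isSpanningTree_edgeSet_subset
    (G.deleteEdges_le B) ⟨hconn⟩
  obtain ⟨e, heB, heT⟩ := hB T hT
  exact (edgeSet_deleteEdges B ▸ hTB heT).2 heB

lemma cutEdges_setOf_reachable_deleteEdges_subset (B : Set (Sym2 V)) (u : V) :
    cutEdges G {z | (G.deleteEdges B).Reachable u z} ⊆ B := by
  rintro _ ⟨he, x, y, rfl, hx, hy⟩
  by_contra heB
  exact hy (hx.trans (Adj.reachable ((deleteEdges_adj ..).mpr ⟨he, heB⟩)))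

/-- If `G` is connected and `B` is a set of edges that meets the edge set of every
spanning tree of `G` and is minimal with this property, then `B` contains a bond of `G`. -/
theorem minimal_meets_every_spanningTree_contains_bond (G : SimpleGraph V) (hG : G.Connected)
    (B : Set (Sym2 V))
    (hB : Minimal (fun D => D ⊆ G.edgeSet ∧
      ∀ T : G.Subgraph, IsSpanningTree G T → (D ∩ T.edgeSet).Nonempty) B) :
    ∃ D : Set (Sym2 V), D ⊆ B ∧ IsBond G D := by
  have := hG.nonempty
  obtain ⟨u, v, huv⟩ := exists_not_reachable_deleteEdges hB.prop.2
  set A := {z | (G.deleteEdges B).Reachable u z}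
  have hAB : cutEdges G A ⊆ B := cutEdges_setOf_reachable_deleteEdges_subset B u
  have hBA : B ⊆ cutEdges G A :=
    hB.2 ⟨fun _ he => he.1, fun _ hT => hT.cutEdges_inter_nonempty (Reachable.refl u) huv⟩ hAB
  obtain ⟨T, hT, -⟩ := hG.exists_isSpanningTree_edgeSet_subset le_rfl
  refine ⟨B, subset_rfl, ⟨(hB.prop.2 T hT).mono Set.inter_subset_left, A, hBA.antisymm hAB⟩, ?_⟩
  rintro D ⟨hD, A', rfl⟩ hDB
  obtain ⟨_, -, x, y, rfl, hx, hy⟩ := hD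
  exact hB.2 ⟨fun _ he => he.1, fun _ hT => hT.cutEdges_inter_nonempty hx hy⟩ hDB
end

section
/- Let F be a field, A a set, and E a thin set of functions A → F. Then the thinly independent subsets of E are the independent sets of a matroid on E. -/
variable {A F : Type*}

/-- A set `X` of functions `A → F` is thin if for every `a ∈ A` only finitely many
`x ∈ X` have `x a ≠ 0`. -/
def Thin [Zero F] (X : Set (A → F)) : Prop :=
  ∀ a : A, {x ∈ X | x a ≠ 0}.Finite

/-- A set `Y` of functions `A → F` is thinly independent if for every thin subset
`X ⊆ Y` and coefficients `α`, the pointwise sum `Σ_{x ∈ X} α_x • x` vanishes only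
when all coefficients vanish. -/
def ThinIndep [Field F] (Y : Set (A → F)) : Prop :=
  ∀ X : Set (A → F), X ⊆ Y → Thin X → ∀ α : (A → F) → F,
    (fun a => ∑ᶠ x ∈ X, α x * x a) = 0 → ∀ x ∈ X, α x = 0

/-!
The thin-sums matroid is the dual of a finitary linear matroid. For `a ∈ A` the row vector
`(x a)_{x ∈ E}` is finitely supported because `E` is thin; send `x ∈ E` to the class of the unit
vector `δ_x` modulo the span of the rows. A linear functional on this quotient is the same as a
family of coefficients `α` whose thin sum `∑ α_x • x` vanishes, so by duality `I ⊆ E` is thinly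
independent iff the image of `E \ I` spans the image of `E`, which is coindependence of `I` in
the linear matroid.
-/

open Set Submodule Finsupp

section LinearIndepOn

variable {ι K V : Type*} [DivisionRing K] [AddCommGroup V] [Module K V] {v : ι → V} {I X : Set ι}

theorem maximal_linearIndepOn_subset_iff :
    Maximal (fun J ↦ J ⊆ X ∧ LinearIndepOn K v J) I ↔
      I ⊆ X ∧ LinearIndepOn K v I ∧ v '' X ⊆ span K (v '' I) := by
  refine ⟨fun ⟨⟨hIX, hI⟩, hmax⟩ ↦ ⟨hIX, hI, image_subset_iff.2 fun y hy ↦ ?_⟩,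
    fun ⟨hIX, hI, hspan⟩ ↦ ⟨⟨hIX, hI⟩, fun J ⟨hJX, hJ⟩ hIJ y hy ↦ ?_⟩⟩
  · exact hI.mem_span_iff.2 fun hyI ↦
      hmax ⟨insert_subset hy hIX, hyI⟩ (subset_insert _ _) (mem_insert _ _)
  · exact hI.mem_span_iff.1 (hspan (mem_image_of_mem v (hJX hy))) (hJ.mono (insert_subset hy hIJ))

end LinearIndepOn

namespace Matroid

variable {α K V : Type*} [DivisionRing K] [AddCommGroup V] [Module K V]
  {E I X : Set α} {v : α → V}

variable (K) in
def ofFun (E : Set α) (v : α → V) : Matroid α :=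
  (IndepMatroid.ofFinitary E (fun I ↦ I ⊆ E ∧ LinearIndepOn K v I)
    (indep_empty := ⟨empty_subset E, linearIndepOn_empty K v⟩)
    (indep_subset := fun _ _ hJ hIJ ↦ ⟨hIJ.trans hJ.1, hJ.2.mono hIJ⟩)
    (indep_aug := by
      intro I B hI hInotmax hBmax
      rw [maximal_linearIndepOn_subset_iff] at hBmax
      by_contra! hnoaug
      refine hInotmax (maximal_linearIndepOn_subset_iff.2 ⟨hI.1, hI.2, ?_⟩)
      refine hBmax.2.2.trans (span_le.2 (image_subset_iff.2 fun x hxB ↦ ?_))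
      exact hI.2.mem_span_iff.2 fun hxI ↦ by_contra fun hxnI ↦
        hnoaug x ⟨hxB, hxnI⟩ (insert_subset (hBmax.1 hxB) hI.1) hxI)
    (indep_compact := fun I hI ↦ ⟨fun x hx ↦ (hI {x} (singleton_subset_iff.2 hx)
      (finite_singleton x)).1 rfl, linearIndepOn_of_finite I fun J hJ hfin ↦ (hI J hJ hfin).2⟩)
    (subset_ground := fun _ hI ↦ hI.1)).matroid

@[simp] theorem ofFun_ground : (ofFun K E v).E = E := rfl

theorem ofFun_isBasis_iff (hX : X ⊆ E) :
    (ofFun K E v).IsBasis I X ↔ I ⊆ X ∧ LinearIndepOn K v I ∧ v '' X ⊆ span K (v '' I) := by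
  have hpred : (fun J ↦ (ofFun K E v).Indep J ∧ J ⊆ X) = fun J ↦ J ⊆ X ∧ LinearIndepOn K v J :=
    funext fun J ↦ propext
      ⟨fun ⟨⟨_, hJ⟩, hJX⟩ ↦ ⟨hJX, hJ⟩, fun ⟨hJX, hJ⟩ ↦ ⟨⟨hJX.trans hX, hJ⟩, hJX⟩⟩
  rw [IsBasis, ofFun_ground, and_iff_left hX, hpred, maximal_linearIndepOn_subset_iff]

theorem ofFun_spanning_iff (hX : X ⊆ E) :
    (ofFun K E v).Spanning X ↔ v '' E ⊆ span K (v '' X) := by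
  rw [spanning_iff_exists_isBase_subset hX]
  constructor
  · rintro ⟨B, hB, hBX⟩
    rw [← isBasis_ground_iff, ofFun_ground, ofFun_isBasis_iff subset_rfl] at hB
    exact hB.2.2.trans (span_mono (image_mono hBX))
  · intro hspan
    obtain ⟨I, hI⟩ := (ofFun K E v).exists_isBasis X hX
    obtain ⟨hIX, hIindep, hXI⟩ := (ofFun_isBasis_iff hX).1 hI
    refine ⟨I, ?_, hIX⟩
    rw [← isBasis_ground_iff, ofFun_ground, ofFun_isBasis_iff subset_rfl]
    exact ⟨hIX.trans hX, hIindep, hspan.trans (span_le.2 hXI)⟩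

theorem ofFun_dual_indep_iff :
    (ofFun K E v)✶.Indep I ↔ I ⊆ E ∧ v '' E ⊆ span K (v '' (E \ I)) := by
  refine ⟨fun hI ↦ ⟨hI.subset_ground, ?_⟩, fun ⟨hIE, hspan⟩ ↦ ?_⟩
  · exact (ofFun_spanning_iff sdiff_subset).1
      (((ofFun K E v).coindep_iff_compl_spanning hI.subset_ground).1 hI)
  · exact ((ofFun K E v).coindep_iff_compl_spanning hIE).2
      ((ofFun_spanning_iff sdiff_subset).2 hspan)

end Matroid

namespace Thin

variable [Field F] {E I X : Set (A → F)}

theorem mono (hE : Thin E) (hXE : X ⊆ E) : Thin X :=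
  fun a ↦ (hE a).subset fun _ hx ↦ ⟨hXE hx.1, hx.2⟩

variable (hE : Thin E)

noncomputable def rowVector (a : A) : (A → F) →₀ F :=
  ∑ x ∈ (hE a).toFinset, x a • single x 1

noncomputable def rowSpan : Submodule F ((A → F) →₀ F) :=
  span F (range hE.rowVector)

noncomputable def quotientVector (x : A → F) : ((A → F) →₀ F) ⧸ hE.rowSpan :=
  hE.rowSpan.mkQ (single x 1)

theorem apply_rowVector (g : ((A → F) →₀ F) →ₗ[F] F) (hXE : X ⊆ E)
    (hg : ∀ x ∈ E \ X, g (single x 1) = 0) (a : A) :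
    g (hE.rowVector a) = ∑ᶠ x ∈ X, g (single x 1) * x a := by
  rw [finsum_mem_eq_sum_of_inter_support_eq _ (t := (hE a).toFinset)]
  · simp only [rowVector, map_sum, map_smul, smul_eq_mul, mul_comm]
  · ext x
    simp only [mem_inter_iff, Function.mem_support, Finite.coe_toFinset, mem_ofPred_eq, ne_eq,
      mul_eq_zero, not_or]
    exact ⟨fun ⟨hx, hgx, hxa⟩ ↦ ⟨⟨hXE hx, hxa⟩, hgx, hxa⟩,
      fun ⟨⟨hx, _⟩, hgx, hxa⟩ ↦ ⟨by_contra fun hxX ↦ hgx (hg x ⟨hx, hxX⟩), hgx, hxa⟩⟩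

theorem thinIndep_of_image_subset_span (hIE : I ⊆ E)
    (hspan : hE.quotientVector '' E ⊆ span F (hE.quotientVector '' (E \ I))) : ThinIndep I := by
  intro X hXI _ α hsum x hx
  let g := linearCombination F (X.indicator α)
  have hg_single (y : A → F) : g (single y 1) = X.indicator α y := by
    simp [g]
  have hg_rowSpan : hE.rowSpan ≤ LinearMap.ker g := by
    refine span_le.2 (range_subset_iff.2 fun a ↦ ?_)
    rw [SetLike.mem_coe, LinearMap.mem_ker, hE.apply_rowVector g (hXI.trans hIE)
      (fun y hy ↦ by rw [hg_single, Set.indicator_of_notMem hy.2])]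
    refine (finsum_mem_congr rfl fun y hy ↦ ?_).trans (congrFun hsum a)
    rw [hg_single, Set.indicator_of_mem hy]
  let g' := hE.rowSpan.liftQ g hg_rowSpan
  have hg'_quotientVector (y : A → F) : g' (hE.quotientVector y) = X.indicator α y :=
    hg_single y
  have hg'_span : span F (hE.quotientVector '' (E \ I)) ≤ LinearMap.ker g' := by
    refine span_le.2 (image_subset_iff.2 fun y hy ↦ ?_)
    rw [mem_preimage, SetLike.mem_coe, LinearMap.mem_ker, hg'_quotientVector,
      Set.indicator_of_notMem fun hyX ↦ hy.2 (hXI hyX)]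
  have := hg'_span (hspan (mem_image_of_mem _ (hIE (hXI hx))))
  rwa [LinearMap.mem_ker, hg'_quotientVector, Set.indicator_of_mem hx] at this

theorem image_subset_span_of_thinIndep (hIE : I ⊆ E) (hI : ThinIndep I) :
    hE.quotientVector '' E ⊆ span F (hE.quotientVector '' (E \ I)) := by
  rintro _ ⟨y, hyE, rfl⟩
  by_contra hy
  obtain ⟨h, hhy, hker⟩ := exists_le_ker_of_notMem hy
  let g := h ∘ₗ hE.rowSpan.mkQ
  have hg_compl : ∀ x ∈ E \ I, g (single x 1) = 0 := fun x hx ↦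
    hker (subset_span (mem_image_of_mem _ hx))
  have hsum : (fun a ↦ ∑ᶠ x ∈ I, g (single x 1) * x a) = 0 := by
    funext a
    rw [← hE.apply_rowVector g hIE hg_compl a, LinearMap.comp_apply, mkQ_apply,
      (Quotient.mk_eq_zero hE.rowSpan).2 (subset_span (mem_range_self a)), map_zero,
      Pi.zero_apply]
  have hyI : y ∈ I := by_contra fun hyI ↦ hhy (hg_compl y ⟨hyE, hyI⟩)
  exact hhy (hI I subset_rfl (hE.mono hIE) _ hsum y hyI)

theorem thinIndep_iff_image_subset_span (hIE : I ⊆ E) :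
    ThinIndep I ↔ hE.quotientVector '' E ⊆ span F (hE.quotientVector '' (E \ I)) :=
  ⟨hE.image_subset_span_of_thinIndep hIE, hE.thinIndep_of_image_subset_span hIE⟩

end Thin

/-- If `E` is a thin set of functions `A → F`, then the thinly independent subsets of `E`
are the independent sets of a matroid on `E`: the thin-sums matroid. -/
theorem thin_sums_matroid_exists [Field F] (E : Set (A → F)) (hE : Thin E) :
    ∃ M : Matroid (A → F), M.E = E ∧
      ∀ I : Set (A → F), M.Indep I ↔ I ⊆ E ∧ ThinIndep I := by
  refine ⟨(Matroid.ofFun F E hE.quotientVector)✶, rfl, fun I ↦ ?_⟩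
  rw [Matroid.ofFun_dual_indep_iff]
  exact and_congr_right fun hIE ↦ (hE.thinIndep_iff_image_subset_span hIE).symm
end

section
/- Let G be a graph whose elementary algebraic cycles form the circuits of a matroid M on E(G). Then the cocircuits of M are exactly the skew cuts of G: the non-empty cuts E(A,B) with (say) G[A] rayless that are minimal among non-empty cuts with a rayless side. -/
variable {V : Type*}

/-- A circuit of a (possibly infinite) matroid: a minimal dependent subset of the ground set. -/
def MatroidCircuit {α : Type*} (M : Matroid α) (C : Set α) : Prop :=
  C ⊆ M.E ∧ ¬ M.Indep C ∧ ∀ D : Set α, D ⊂ C → M.Indep D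

/-- The subgraph of `G` induced on `A` is rayless: it contains no one-way infinite path. -/
def RaylessIn (G : SimpleGraph V) (A : Set V) : Prop :=
  ¬ ∃ f : ℕ → V, Function.Injective f ∧ (∀ n : ℕ, f n ∈ A) ∧
      ∀ n : ℕ, G.Adj (f n) (f (n + 1))

/-- A skew cut of `G`: a non-empty cut one of whose sides induces a rayless subgraph,
minimal with this property among the non-empty cuts. -/
def IsSkewCut (G : SimpleGraph V) (D : Set (Sym2 V)) : Prop :=
  Minimal (fun D' : Set (Sym2 V) =>
    D'.Nonempty ∧ ∃ A : Set V, D' = cutEdges G A ∧ RaylessIn G A) D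

/-- The edge set of a finite cycle of `G`. -/
def IsFiniteCycleEdgeSet (G : SimpleGraph V) (C : Set (Sym2 V)) : Prop :=
  ∃ (v : V) (w : G.Walk v v), w.IsCycle ∧ C = {e | e ∈ w.edges}

/-- The edge set of a double ray (2-way infinite path) of `G`. -/
def IsDoubleRayEdgeSet (G : SimpleGraph V) (C : Set (Sym2 V)) : Prop :=
  ∃ f : ℤ → V, Function.Injective f ∧ (∀ i : ℤ, G.Adj (f i) (f (i + 1))) ∧
    C = {e | ∃ i : ℤ, e = s(f i, f (i + 1))}

/-- An elementary algebraic cycle of `G`: the edge set of a finite cycle or of a double ray. -/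
def IsElemAlgCycle (G : SimpleGraph V) (C : Set (Sym2 V)) : Prop :=
  IsFiniteCycleEdgeSet G C ∨ IsDoubleRayEdgeSet G C

/-!
A set is codependent in `M` iff it contains a cocircuit, and a nonempty set `D` meeting no
circuit in exactly one element is codependent (a base avoiding `D` has a fundamental circuit
meeting `D` once). Hence cocircuits and skew cuts are both the minimal elements of the family of
codependent sets, once we know that (i) a nonempty cut with a rayless side meets no elementary
algebraic cycle in exactly one edge, and (ii) every nonempty `D` with that property contains such
a cut.

For (i): a finite cycle meeting `E(A, B)` only in `uv` leaves a `u`–`v` path off the cut, and a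
double ray meeting it only in `uv` has a tail inside the rayless side. For (ii): in `G - D` the ends
of an edge `uv ∈ D` lie in different components (else some finite cycle meets `D` once), and they
cannot both start rays (else the two rays and `uv` form a double ray meeting `D` once). If no ray
starts at `u`, the component of `u` is rayless and its cut lies in `D`.
-/

open Set SimpleGraph

theorem matroidCircuit_iff_isCircuit {α : Type*} {M : Matroid α} {C : Set α} :
    MatroidCircuit M C ↔ M.IsCircuit C := by
  simp only [MatroidCircuit, Matroid.isCircuit_iff_forall_ssubset, Matroid.Dep]
  tauto

theorem Matroid.dual_dep_of_forall_isCircuit_inter_ne_singleton {α : Type*} {M : Matroid α}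
    {X : Set α} (hXE : X ⊆ M.E) (hX : X.Nonempty) (h : ∀ C e, M.IsCircuit C → C ∩ X ≠ {e}) :
    M✶.Dep X := by
  obtain ⟨e, he⟩ := hX
  refine (M✶.not_indep_iff hXE).1 fun hXi => ?_
  obtain ⟨C, hC, hCX⟩ := hXi.exists_isCocircuit_inter_eq_mem he
  exact h C e (Matroid.dual_isCocircuit_iff.1 hC) hCX

theorem Int.forall_sub_of_iff_add_one {P : ℤ → Prop} {i₀ : ℤ}
    (h : ∀ i, i ≠ i₀ → (P i ↔ P (i + 1))) (h₀ : P i₀) : ∀ n : ℕ, P (i₀ - n) := by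
  intro n
  induction n with
  | zero => simpa using h₀
  | succ n ih =>
    have := h (i₀ - (n + 1 : ℕ)) (by omega)
    rw [show i₀ - (n + 1 : ℕ) + 1 = i₀ - n by push_cast; ring] at this
    exact this.2 ih

theorem Int.forall_add_of_iff_add_one {P : ℤ → Prop} {i₀ : ℤ}
    (h : ∀ i, i ≠ i₀ → (P i ↔ P (i + 1))) (h₁ : P (i₀ + 1)) : ∀ n : ℕ, P (i₀ + 1 + n) := by
  intro n
  induction n with
  | zero => simpa using h₁
  | succ n ih =>
    have := h (i₀ + 1 + n) (by omega)
    rw [show i₀ + 1 + n + 1 = i₀ + 1 + (n + 1 : ℕ) by push_cast; ring] at this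
    exact this.1 ih

theorem eq_of_sym2_mk_add_one_eq {f : ℤ → V} (hf : Function.Injective f) {i j : ℤ}
    (h : s(f i, f (i + 1)) = s(f j, f (j + 1))) : i = j := by
  rcases Sym2.eq_iff.1 h with ⟨h₁, -⟩ | ⟨h₁, h₂⟩
  · exact hf h₁
  · have := hf h₁
    have := hf h₂
    omega

section Cuts

variable {G : SimpleGraph V} {A : Set V} {x y : V}

theorem mem_cutEdges_iff : s(x, y) ∈ cutEdges G A ↔ G.Adj x y ∧ ¬(x ∈ A ↔ y ∈ A) := by
  simp only [cutEdges, mem_ofPred_eq, mem_edgeSet, Sym2.eq_iff]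
  constructor
  · rintro ⟨hxy, u, v, ⟨rfl, rfl⟩ | ⟨rfl, rfl⟩, hu, hv⟩ <;> tauto
  · rintro ⟨hxy, hcross⟩
    refine ⟨hxy, ?_⟩
    by_cases hx : x ∈ A
    · exact ⟨x, y, Or.inl ⟨rfl, rfl⟩, hx, by tauto⟩
    · exact ⟨y, x, Or.inr ⟨rfl, rfl⟩, by tauto, hx⟩

theorem cutEdges_subset_edgeSet : cutEdges G A ⊆ G.edgeSet := fun _ he => he.1

theorem SimpleGraph.Reachable.mem_iff_of_deleteEdges_cutEdges
    (h : (G.deleteEdges (cutEdges G A)).Reachable x y) : x ∈ A ↔ y ∈ A := by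
  obtain ⟨w⟩ := h
  induction w with
  | nil => rfl
  | cons hadj _ ih =>
    rw [deleteEdges_adj, mem_cutEdges_iff] at hadj
    exact (not_not.1 fun hcross => hadj.2 ⟨hadj.1, hcross⟩).trans ih

end Cuts

section Cycles

variable {G : SimpleGraph V} {A : Set V} {C D : Set (Sym2 V)} {e : Sym2 V}

theorem exists_isCycle_inter_eq_singleton_iff_reachable {a b : V} (hab : G.Adj a b)
    (he : s(a, b) ∈ D) :
    (∃ (u : V) (p : G.Walk u u), p.IsCycle ∧ {e | e ∈ p.edges} ∩ D = {s(a, b)}) ↔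
      (G.deleteEdges D).Reachable a b := by
  -- In `G' = G - (D \ {ab})` the cycles through `ab` are exactly the cycles of `G` meeting `D`
  -- only in `ab`, so the bridge criterion for `ab` in `G'` is the claim.
  obtain ⟨G', hG'⟩ : ∃ G', G' = G.deleteEdges (D \ {s(a, b)}) := ⟨_, rfl⟩
  have hdel : G'.deleteEdges {s(a, b)} = G.deleteEdges D := by
    rw [hG', deleteEdges_deleteEdges, sdiff_union_self,
      union_eq_left.2 (singleton_subset_iff.2 he)]
  have hedges : G'.edgeSet = G.edgeSet \ (D \ {s(a, b)}) := by rw [hG', edgeSet_deleteEdges]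
  have hab' : G'.Adj a b := by
    rw [hG', deleteEdges_adj]
    exact ⟨hab, fun h => h.2 rfl⟩
  rw [← hdel]
  refine Iff.trans ?_ (and_iff_right hab')
  rw [adj_and_reachable_delete_edges_iff_exists_cycle]
  constructor
  · rintro ⟨u, p, hp, hpD⟩
    have hpG' : ∀ e ∈ p.edges, e ∈ G'.edgeSet := fun e hep => by
      rw [hedges]
      exact ⟨p.edges_subset_edgeSet hep, fun heD => heD.2 (hpD.subset ⟨hep, heD.1⟩)⟩
    refine ⟨u, p.transfer G' hpG', hp.transfer hpG', ?_⟩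
    rw [Walk.edges_transfer]
    exact (hpD.superset rfl).1
  · rintro ⟨u, p, hp, hep⟩
    refine ⟨u, p.mapLe (hG' ▸ deleteEdges_le _), hp.mapLe _, ?_⟩
    rw [Walk.edges_mapLe_eq_edges]
    ext e
    refine ⟨fun ⟨hep', heD⟩ => by_contra fun hne => ?_, fun h => ?_⟩
    · have := p.edges_subset_edgeSet hep'
      rw [hedges] at this
      exact this.2 ⟨heD, hne⟩
    · rw [mem_singleton_iff.1 h]
      exact ⟨hep, he⟩

theorem IsFiniteCycleEdgeSet.inter_cutEdges_ne_singleton (hC : IsFiniteCycleEdgeSet G C) :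
    C ∩ cutEdges G A ≠ {e} := by
  obtain ⟨u, p, hp, rfl⟩ := hC
  intro hpA
  have he : e ∈ cutEdges G A := (hpA.superset (mem_singleton e)).2
  induction e using Sym2.ind with
  | _ a b =>
    obtain ⟨hab, hcross⟩ := mem_cutEdges_iff.1 he
    exact hcross ((exists_isCycle_inter_eq_singleton_iff_reachable hab he).1
      ⟨u, p, hp, hpA⟩).mem_iff_of_deleteEdges_cutEdges

end Cycles

namespace SimpleGraph

def IsRay (H : SimpleGraph V) (f : ℕ → V) : Prop :=
  Function.Injective f ∧ ∀ n, H.Adj (f n) (f (n + 1))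

variable {H : SimpleGraph V} {f g : ℕ → V} {u x : V}

theorem IsRay.reachable (hf : H.IsRay f) (n : ℕ) : H.Reachable (f 0) (f n) := by
  induction n with
  | zero => rfl
  | succ n ih => exact ih.trans (hf.2 n).reachable

theorem IsRay.exists_isRay_of_adj (hf : H.IsRay f) (h : H.Adj u (f 0)) :
    ∃ g, H.IsRay g ∧ g 0 = u := by
  by_cases hu : ∃ k, f k = u
  · obtain ⟨k, rfl⟩ := hu
    exact ⟨fun n => f (k + n), ⟨fun m n hmn => by simpa using hf.1 hmn, fun n => hf.2 (k + n)⟩,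
      rfl⟩
  · push Not at hu
    refine ⟨fun n => Nat.casesOn n u f, ⟨?_, ?_⟩, rfl⟩
    · rintro (_ | m) (_ | n) hmn
      · rfl
      · exact absurd hmn.symm (hu n)
      · exact absurd hmn (hu m)
      · exact congrArg _ (hf.1 hmn)
    · rintro (_ | n)
      exacts [h, hf.2 n]

theorem exists_isRay_of_walk (w : H.Walk u x) (hx : ∃ f, H.IsRay f ∧ f 0 = x) :
    ∃ f, H.IsRay f ∧ f 0 = u := by
  induction w with
  | nil => exact hx
  | cons h _ ih =>
    obtain ⟨f, hf, hf0⟩ := ih hx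
    exact hf.exists_isRay_of_adj (hf0 ▸ h)

theorem isRay_add {f : ℤ → V} (hf : Function.Injective f) (hadj : ∀ i, H.Adj (f i) (f (i + 1)))
    (i : ℤ) : H.IsRay fun n : ℕ => f (i + n) := by
  refine ⟨fun m n hmn => by simpa using hf hmn, fun n => ?_⟩
  simpa [add_assoc] using hadj (i + n)

theorem isRay_sub {f : ℤ → V} (hf : Function.Injective f) (hadj : ∀ i, H.Adj (f i) (f (i + 1)))
    (i : ℤ) : H.IsRay fun n : ℕ => f (i - n) := by
  refine ⟨fun m n hmn => by simpa using hf hmn, fun n => ?_⟩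
  have := hadj (i - (n + 1 : ℕ))
  rw [show i - (n + 1 : ℕ) + 1 = i - n by push_cast; ring] at this
  exact this.symm

theorem exists_doubleRay_of_isRay (hf : H.IsRay f) (hg : H.IsRay g) (hfg : ∀ m n, f m ≠ g n) :
    ∃ d : ℤ → V, Function.Injective d ∧ d (-1) = g 0 ∧ d 0 = f 0 ∧
      ∀ i, i ≠ -1 → H.Adj (d i) (d (i + 1)) := by
  refine ⟨fun | Int.ofNat n => f n | Int.negSucc n => g n, ?_, rfl, rfl, ?_⟩
  · rintro (m | m) (n | n) hmn
    · exact congrArg _ (hf.1 hmn)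
    · exact absurd hmn (hfg m n)
    · exact absurd hmn.symm (hfg n m)
    · exact congrArg _ (hg.1 hmn)
  · rintro (n | _ | n) hi
    · exact hf.2 n
    · exact absurd rfl hi
    · exact (hg.2 n).symm

end SimpleGraph

section SkewCuts

variable {G : SimpleGraph V} {A : Set V} {C D : Set (Sym2 V)} {e : Sym2 V}

theorem IsDoubleRayEdgeSet.inter_cutEdges_ne_singleton (hA : RaylessIn G A)
    (hC : IsDoubleRayEdgeSet G C) : C ∩ cutEdges G A ≠ {e} := by
  obtain ⟨f, hf, hadj, rfl⟩ := hC
  intro hfA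
  obtain ⟨⟨i₀, rfl⟩, hcut⟩ := hfA.superset (mem_singleton e)
  have hside : ∀ i, i ≠ i₀ → (f i ∈ A ↔ f (i + 1) ∈ A) := fun i hi => by
    by_contra hcross
    have hi' : s(f i, f (i + 1)) ∈ ({s(f i₀, f (i₀ + 1))} : Set (Sym2 V)) := by
      rw [← hfA]
      exact ⟨⟨i, rfl⟩, mem_cutEdges_iff.2 ⟨hadj i, hcross⟩⟩
    exact hi (eq_of_sym2_mk_add_one_eq hf (mem_singleton_iff.1 hi'))
  by_cases h₀ : f i₀ ∈ A
  · have hr := isRay_sub hf hadj i₀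
    exact hA ⟨_, hr.1, Int.forall_sub_of_iff_add_one hside h₀, hr.2⟩
  · have h₁ : f (i₀ + 1) ∈ A := by
      have := (mem_cutEdges_iff.1 hcut).2
      tauto
    have hr := isRay_add hf hadj (i₀ + 1)
    exact hA ⟨_, hr.1, Int.forall_add_of_iff_add_one hside h₁, hr.2⟩

theorem IsElemAlgCycle.inter_cutEdges_ne_singleton (hA : RaylessIn G A)
    (hC : IsElemAlgCycle G C) (e : Sym2 V) : C ∩ cutEdges G A ≠ {e} :=
  hC.elim (·.inter_cutEdges_ne_singleton) (·.inter_cutEdges_ne_singleton hA)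

/-- The side is the component of `u` in `G - D`; a ray inside it avoids `D`, since the ends of an
edge of `D` lie in different components. -/
theorem exists_rayless_cutEdges_subset_of_not_isRay {u v : V} (hDE : D ⊆ G.edgeSet)
    (hsep : ∀ ⦃a b⦄, s(a, b) ∈ D → ¬(G.deleteEdges D).Reachable a b) (huv : s(u, v) ∈ D)
    (hu : ¬∃ f, (G.deleteEdges D).IsRay f ∧ f 0 = u) :
    ∃ A, (cutEdges G A).Nonempty ∧ cutEdges G A ⊆ D ∧ RaylessIn G A := by
  refine ⟨{x | (G.deleteEdges D).Reachable u x},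
    ⟨s(u, v), mem_cutEdges_iff.2 ⟨hDE huv, fun h => hsep huv (h.1 Reachable.rfl)⟩⟩, ?_, ?_⟩
  · intro e he
    induction e using Sym2.ind with
    | _ a b =>
      obtain ⟨hab, hcross⟩ := mem_cutEdges_iff.1 he
      by_contra heD
      have hab' : (G.deleteEdges D).Adj a b := deleteEdges_adj.2 ⟨hab, heD⟩
      exact hcross ⟨fun ha => ha.trans hab'.reachable, fun hb => hb.trans hab'.symm.reachable⟩
  · rintro ⟨f, hinj, hfA, hadj⟩
    have hf : (G.deleteEdges D).IsRay f := ⟨hinj, fun n => deleteEdges_adj.2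
      ⟨hadj n, fun hD => hsep hD ((hfA n).symm.trans (hfA (n + 1)))⟩⟩
    obtain ⟨w⟩ := hfA 0
    exact hu (exists_isRay_of_walk w ⟨f, hf, rfl⟩)

theorem not_isRay_from_both_ends {u v : V} (hDE : D ⊆ G.edgeSet)
    (hdr : ∀ C, IsDoubleRayEdgeSet G C → C ∩ D ≠ {s(u, v)})
    (hsep : ∀ ⦃a b⦄, s(a, b) ∈ D → ¬(G.deleteEdges D).Reachable a b) (huv : s(u, v) ∈ D) :
    ¬((∃ f, (G.deleteEdges D).IsRay f ∧ f 0 = u) ∧ ∃ g, (G.deleteEdges D).IsRay g ∧ g 0 = v) := by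
  rintro ⟨⟨f, hf, rfl⟩, ⟨g, hg, rfl⟩⟩
  have hfg : ∀ m n, f m ≠ g n := fun m n h =>
    hsep huv ((hf.reachable m).trans (h ▸ (hg.reachable n).symm))
  obtain ⟨d, hinj, hd₁, hd₀, hadj⟩ := exists_doubleRay_of_isRay hf hg hfg
  have hmiddle : s(d (-1), d (-1 + 1)) = s(f 0, g 0) := by
    rw [show (-1 : ℤ) + 1 = 0 by rfl, hd₁, hd₀, Sym2.eq_swap]
  refine hdr _ ⟨d, hinj, fun i => ?_, rfl⟩ ?_
  · rcases eq_or_ne i (-1) with rfl | hi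
    · rw [show (-1 : ℤ) + 1 = 0 by rfl, hd₁, hd₀]
      exact (hDE huv).symm
    · exact (deleteEdges_adj.1 (hadj i hi)).1
  · ext e
    refine ⟨?_, fun h => ⟨⟨-1, (mem_singleton_iff.1 h).trans hmiddle.symm⟩, h ▸ huv⟩⟩
    rintro ⟨⟨i, rfl⟩, heD⟩
    rcases eq_or_ne i (-1) with rfl | hi
    · exact hmiddle
    · exact absurd heD (deleteEdges_adj.1 (hadj i hi)).2

theorem exists_rayless_cutEdges_subset (hDE : D ⊆ G.edgeSet) (hD : D.Nonempty)
    (hC : ∀ C, IsElemAlgCycle G C → ∀ e, C ∩ D ≠ {e}) :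
    ∃ A, (cutEdges G A).Nonempty ∧ cutEdges G A ⊆ D ∧ RaylessIn G A := by
  have hsep : ∀ ⦃a b⦄, s(a, b) ∈ D → ¬(G.deleteEdges D).Reachable a b := fun a b he hr => by
    obtain ⟨u, p, hp, hpD⟩ := (exists_isCycle_inter_eq_singleton_iff_reachable (hDE he) he).2 hr
    exact hC _ (Or.inl ⟨u, p, hp, rfl⟩) _ hpD
  obtain ⟨e, he⟩ := hD
  induction e using Sym2.ind with
  | _ u v =>
    by_cases hu : ∃ f, (G.deleteEdges D).IsRay f ∧ f 0 = u
    · refine exists_rayless_cutEdges_subset_of_not_isRay hDE hsep (Sym2.eq_swap ▸ he) fun hv => ?_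
      exact not_isRay_from_both_ends hDE (fun C hC' => hC C (Or.inr hC') _) hsep he ⟨hu, hv⟩
    · exact exists_rayless_cutEdges_subset_of_not_isRay hDE hsep he hu

end SkewCuts

/-- If the elementary algebraic cycles of `G` are the circuits of a matroid `M`, then the
cocircuits of `M` are exactly the skew cuts of `G`. -/
theorem cocircuits_eq_skew_cuts (G : SimpleGraph V) (M : Matroid (Sym2 V))
    (hE : M.E = G.edgeSet)
    (hcirc : ∀ C : Set (Sym2 V), MatroidCircuit M C ↔ IsElemAlgCycle G C) :
    ∀ D : Set (Sym2 V), MatroidCircuit M✶ D ↔ IsSkewCut G D := by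
  have hcirc' : ∀ C, M.IsCircuit C ↔ IsElemAlgCycle G C := fun C =>
    matroidCircuit_iff_isCircuit.symm.trans (hcirc C)
  intro D
  rw [matroidCircuit_iff_isCircuit, Matroid.isCircuit_def, IsSkewCut]
  refine minimal_iff_minimal_of_imp_of_forall ?_ ?_
  · rintro _ ⟨hne, A, rfl, hA⟩
    refine Matroid.dual_dep_of_forall_isCircuit_inter_ne_singleton
      (hE ▸ cutEdges_subset_edgeSet) hne fun C e hC => ?_
    exact ((hcirc' C).1 hC).inter_cutEdges_ne_singleton hA e
  · intro X hX
    obtain ⟨K, hKX, hK⟩ := hX.exists_isCircuit_subset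
    obtain ⟨A, hne, hAK, hA⟩ := exists_rayless_cutEdges_subset (hE ▸ hK.subset_ground)
      hK.nonempty fun C hC e => ((hcirc' C).2 hC).inter_isCocircuit_ne_singleton hK
    exact ⟨_, hAK.trans hKX, hne, A, rfl, hA⟩
end
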